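/- arXiv:1205.1619 — 3 statements merged into one kernel-verified Lean document; each statement's English description precedes it below -/
import Mathlib

section
/- Let F : ℝⁿ → ℝ be integrable with c := ∫_{ℝⁿ} F(z) dz > 0. Then there exists R₀ > 0 such that for all R ≥ R₀ one has ∫_{B_R} ∫_{B_R} F(x − y) dx dy ≥ (c/2) · vol(B_R). In particular, if the correlation function does not integrate to zero, the integrated fluctuations over macroscopic balls grow at least proportionally to their volume. -/
/-!
By Fubini, `∫_{B_R} ∫_{B_R} F (x - y) dy dx = ∫ F z · vol (B_R ∩ B_R(z)) dz`. Since
`B_{R - ‖z‖} ⊆ B_R ∩ B_R(z) ⊆ B_R`, the weight `vol (B_R ∩ B_R(z)) / vol B_R` lies between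
`(1 - ‖z‖ / R) ^ n` and `1`, so it tends to `1` for every `z`, and dominated convergence (with
dominating function `|F|`) shows that the integrated fluctuation divided by `vol B_R` tends to
`∫ F = c > c / 2`.
-/

open MeasureTheory Metric Filter Topology Set Function

theorem closedBall_sub_norm_subset {E : Type*} [SeminormedAddCommGroup E] (z : E) (R : ℝ) :
    closedBall 0 (R - ‖z‖) ⊆ closedBall z R ∩ closedBall 0 R := by
  intro x hx
  rw [mem_closedBall_zero_iff] at hx
  refine ⟨?_, mem_closedBall_zero_iff.2 (by linarith [norm_nonneg z])⟩
  rw [mem_closedBall, dist_eq_norm]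
  linarith [norm_sub_le x z]

theorem measureReal_closedBall_pos {X : Type*} [PseudoMetricSpace X] [ProperSpace X]
    [MeasurableSpace X] (μ : Measure X) [μ.IsOpenPosMeasure] [IsFiniteMeasureOnCompacts μ]
    (x : X) {r : ℝ} (hr : 0 < r) : 0 < μ.real (closedBall x r) :=
  ENNReal.toReal_pos (measure_closedBall_pos μ x hr).ne' measure_closedBall_lt_top.ne

theorem measureReal_inter_closedBall_le {X : Type*} [PseudoMetricSpace X] [ProperSpace X]
    [MeasurableSpace X] (μ : Measure X) [IsFiniteMeasureOnCompacts μ] (s : Set X) (x : X)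
    (r : ℝ) : μ.real (s ∩ closedBall x r) ≤ μ.real (closedBall x r) :=
  measureReal_mono inter_subset_right measure_closedBall_lt_top.ne

theorem measurableSet_dist_le {X : Type*} [PseudoMetricSpace X] [MeasurableSpace X]
    [OpensMeasurableSpace X] [SecondCountableTopology X] (R : ℝ) :
    MeasurableSet {p : X × X | dist p.2 p.1 ≤ R} :=
  measurableSet_le (f := fun p : X × X => dist p.2 p.1) (by fun_prop) measurable_const

section AddHaar

variable {E : Type*} [NormedAddCommGroup E] [NormedSpace ℝ E] [FiniteDimensional ℝ E]
  [MeasurableSpace E] [BorelSpace E] (μ : Measure E) [μ.IsAddHaarMeasure]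

theorem setIntegral_closedBall_sub_eq (F : E → ℝ) (x : E) (R : ℝ) :
    ∫ y in closedBall 0 R, F (x - y) ∂μ = ∫ z in closedBall x R, F z ∂μ := by
  rw [← integral_indicator measurableSet_closedBall, ← integral_indicator measurableSet_closedBall,
    ← integral_sub_left_eq_self _ μ x]
  congr 1 with y
  simp [indicator, dist_eq_norm, norm_sub_rev x y]

theorem integral_closedBall_closedBall_sub {F : E → ℝ} (hF : Integrable F μ) (R : ℝ) :
    ∫ x in closedBall 0 R, ∫ y in closedBall 0 R, F (x - y) ∂μ ∂μ =
      ∫ z, μ.real (closedBall z R ∩ closedBall 0 R) * F z ∂μ := by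
  have hind (x : E) : ∫ z in closedBall x R, F z ∂μ = ∫ z, (closedBall x R).indicator F z ∂μ :=
    (integral_indicator measurableSet_closedBall).symm
  simp_rw [setIntegral_closedBall_sub_eq, hind]
  have hint : Integrable (uncurry fun x z => (closedBall x R).indicator F z)
      ((μ.restrict (closedBall 0 R)).prod μ) := by
    have : IsFiniteMeasure (μ.restrict (closedBall 0 R)) :=
      isFiniteMeasure_restrict.2 measure_closedBall_lt_top.ne
    refine (((integrable_const (1 : ℝ)).mul_prod hF).indicator (measurableSet_dist_le R)).congr
      (.of_forall fun p => ?_)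
    simp [indicator, uncurry]
  rw [integral_integral_swap hint]
  congr 1 with z
  have hswap (x : E) :
      (closedBall x R).indicator F z = (closedBall z R).indicator (fun _ => F z) x := by
    simp [indicator, dist_comm z x]
  simp_rw [hswap]
  rw [integral_indicator_const _ measurableSet_closedBall,
    measureReal_restrict_apply measurableSet_closedBall, smul_eq_mul]

theorem measurable_measure_closedBall_inter_closedBall (R : ℝ) :
    Measurable fun z => μ (closedBall z R ∩ closedBall 0 R) :=
  measurable_measure_prodMk_left (s := {p : E × E | p.2 ∈ closedBall p.1 R ∩ closedBall 0 R})
    ((measurableSet_dist_le R).inter (measurableSet_closedBall.preimage measurable_snd))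

theorem tendsto_measureReal_closedBall_inter_closedBall_div (z : E) :
    Tendsto (fun R => μ.real (closedBall z R ∩ closedBall 0 R) / μ.real (closedBall 0 R))
      atTop (𝓝 1) := by
  set d := Module.finrank ℝ E
  have hlim : Tendsto (fun R : ℝ => (1 - ‖z‖ / R) ^ d) atTop (𝓝 1) := by
    simpa using ((tendsto_const_nhds.sub (tendsto_const_nhds.div_atTop tendsto_id)).pow d :
      Tendsto (fun R : ℝ => (1 - ‖z‖ / R) ^ d) atTop (𝓝 ((1 - 0) ^ d)))
  refine tendsto_of_tendsto_of_tendsto_of_le_of_le' hlim tendsto_const_nhds ?_ ?_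
  · filter_upwards [eventually_gt_atTop ‖z‖] with R hR
    have hR0 : 0 < R := (norm_nonneg z).trans_lt hR
    have hB := measureReal_closedBall_pos μ (0 : E) one_pos
    calc (1 - ‖z‖ / R) ^ d = μ.real (closedBall 0 (R - ‖z‖)) / μ.real (closedBall 0 R) := by
          rw [Measure.addHaar_real_closedBall' μ _ (sub_nonneg.2 hR.le),
            Measure.addHaar_real_closedBall' μ _ hR0.le, mul_div_mul_right _ _ hB.ne', ← div_pow,
            one_sub_div hR0.ne']
      _ ≤ _ := div_le_div_of_nonneg_right (measureReal_mono (closedBall_sub_norm_subset z R)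
          (measure_ne_top_of_subset inter_subset_right (measure_closedBall_lt_top (μ := μ)).ne))
          measureReal_nonneg
  · filter_upwards with R
    exact div_le_one_of_le₀ (measureReal_inter_closedBall_le μ _ _ _) measureReal_nonneg

theorem tendsto_integral_closedBall_closedBall_sub_div {F : E → ℝ} (hF : Integrable F μ) :
    Tendsto (fun R => (∫ x in closedBall 0 R, ∫ y in closedBall 0 R, F (x - y) ∂μ ∂μ) /
      μ.real (closedBall 0 R)) atTop (𝓝 (∫ z, F z ∂μ)) := by
  set ρ : ℝ → E → ℝ := fun R z =>
    μ.real (closedBall z R ∩ closedBall 0 R) / μ.real (closedBall 0 R)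
  have hρ : ∀ R, (∫ x in closedBall 0 R, ∫ y in closedBall 0 R, F (x - y) ∂μ ∂μ) /
      μ.real (closedBall 0 R) = ∫ z, ρ R z * F z ∂μ := by
    intro R
    simp_rw [integral_closedBall_closedBall_sub μ hF, ρ, div_mul_eq_mul_div, integral_div]
  simp_rw [hρ]
  refine tendsto_integral_filter_of_dominated_convergence (fun z => ‖F z‖)
    (.of_forall fun R => ?_) (.of_forall fun R => .of_forall fun z => ?_) hF.norm
    (.of_forall fun z => ?_)
  · exact (((measurable_measure_closedBall_inter_closedBall μ R).ennreal_toReal.div_const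
      _).aestronglyMeasurable.mul hF.aestronglyMeasurable)
  · rw [norm_mul, Real.norm_of_nonneg (by positivity)]
    exact mul_le_of_le_one_left (norm_nonneg _)
      (div_le_one_of_le₀ (measureReal_inter_closedBall_le μ _ _ _) measureReal_nonneg)
  · simpa using (tendsto_measureReal_closedBall_inter_closedBall_div μ z).mul_const (F z)

end AddHaar

/-- If the integrable covariance `F` has positive total integral `c`, then for
all sufficiently large `R` the integrated fluctuation over the ball `B_R` is at least
`(c/2) · vol(B_R)`, i.e. it grows at least proportionally to the volume. -/
theorem integrated_fluctuation_volume_lower_bound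
    {n : ℕ} (F : EuclideanSpace ℝ (Fin n) → ℝ) (hF : Integrable F)
    (c : ℝ) (hc : c = ∫ z, F z) (hcpos : 0 < c) :
    ∃ R₀ : ℝ, 0 < R₀ ∧ ∀ R ≥ R₀,
      (c / 2) * (volume (Metric.closedBall (0 : EuclideanSpace ℝ (Fin n)) R)).toReal ≤
        ∫ x in Metric.closedBall (0 : EuclideanSpace ℝ (Fin n)) R,
          ∫ y in Metric.closedBall (0 : EuclideanSpace ℝ (Fin n)) R, F (x - y) := by
  have hlim := tendsto_integral_closedBall_closedBall_sub_div volume hF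
  rw [← hc] at hlim
  obtain ⟨R₀, hR₀⟩ := eventually_atTop.1 (hlim.eventually (eventually_gt_nhds (half_lt_self hcpos)))
  refine ⟨max R₀ 1, by positivity, fun R hR => ?_⟩
  have hvol := measureReal_closedBall_pos volume (0 : EuclideanSpace ℝ (Fin n))
    (zero_lt_one.trans_le (le_of_max_le_right hR))
  exact ((lt_div_iff₀ hvol).1 (hR₀ R (le_of_max_le_left hR))).le
end

section
/- (First-order averaging theorem.) Let f : ℝⁿ × ℝ → ℝⁿ be continuous, T-periodic in its second argument (f(x, t + T) = f(x, t)), bounded by M (‖f(x,t)‖ ≤ M), and Lipschitz in x with constant L uniformly in t. Define the averaged vector field f̄(x) := (1/T)∫₀ᵀ f(x, s) ds. Fix x₀ ∈ ℝⁿ and T₀ > 0. For ε ∈ (0, 1], let x_ε : [0, T₀/ε] → ℝⁿ be differentiable with x_ε'(t) = ε·f(x_ε(t), t) and x_ε(0) = x₀, and let y_ε : [0, T₀/ε] → ℝⁿ be differentiable with y_ε'(t) = ε·f̄(y_ε(t)) and y_ε(0) = x₀. Then there exists a constant C, depending only on M, L, T and T₀, such that ‖x_ε(t) − y_ε(t)‖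 ≤ C·ε for all t ∈ [0, T₀/ε] and all ε ∈ (0, 1]. That is, on time scales of order 1/ε the true slowly varying motion is approximated to order ε by the averaged equation. -/
open MeasureTheory Set

open scoped NNReal

/-! Write the averaged equation as `y' = ε f(y, t) - ε g(t)` with the defect
`g(t) = f(y(t), t) - f̄(y(t))`. Since `y` moves by only `O(ε)` during a period and `f(x, ·) - f̄(x)`
has zero mean over every period, `∫₀ᵗ g = O(ε t + 1)`, which is `O(1)` for `t ≤ T₀ / ε`.
The difference `w = x - y - ε ∫₀ᵗ g` solves `w' = ε (f(x, t) - f(y, t))`, so Gronwall's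
inequality gives `‖x - y‖ = O(ε exp(L T₀))`. -/

section TimeAverage

variable {E : Type*} [NormedAddCommGroup E] [NormedSpace ℝ E]
  {f : E → ℝ → E} {T M : ℝ} {L : ℝ≥0}

noncomputable def timeAverage (f : E → ℝ → E) (T : ℝ) (x : E) : E :=
  (1 / T) • ∫ s in (0 : ℝ)..T, f x s

theorem norm_one_div_smul_intervalIntegral_le {g : ℝ → E} {C : ℝ} (hT : 0 < T)
    (hg : ∀ s, ‖g s‖ ≤ C) : ‖(1 / T) • ∫ s in (0 : ℝ)..T, g s‖ ≤ C := by
  have hint : ‖∫ s in (0 : ℝ)..T, g s‖ ≤ C * T := by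
    simpa [abs_of_pos hT] using
      intervalIntegral.norm_integral_le_of_norm_le_const (a := 0) (b := T) fun s _ => hg s
  rw [norm_smul, Real.norm_of_nonneg (by positivity)]
  calc 1 / T * ‖∫ s in (0 : ℝ)..T, g s‖ ≤ 1 / T * (C * T) := by gcongr
    _ = C := by field_simp

theorem norm_timeAverage_le (hT : 0 < T) {x : E} (hbound : ∀ t, ‖f x t‖ ≤ M) :
    ‖timeAverage f T x‖ ≤ M :=
  norm_one_div_smul_intervalIntegral_le hT hbound

theorem lipschitzWith_timeAverage (hT : 0 < T)
    (hf : ∀ x, IntervalIntegrable (f x) volume 0 T) (hlip : ∀ t, LipschitzWith L (f · t)) :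
    LipschitzWith L (timeAverage f T) := by
  refine LipschitzWith.of_dist_le_mul fun x y => ?_
  rw [dist_eq_norm, dist_eq_norm, timeAverage, timeAverage, ← smul_sub,
    ← intervalIntegral.integral_sub (hf x) (hf y)]
  exact norm_one_div_smul_intervalIntegral_le hT fun s => by
    simpa only [dist_eq_norm] using (hlip s).dist_le_mul x y

theorem intervalIntegral_add_period_eq_smul_timeAverage (hT : 0 < T) {x : E}
    (hper : Function.Periodic (f x) T) (a : ℝ) :
    ∫ s in a..a + T, f x s = T • timeAverage f T x := by
  rw [hper.intervalIntegral_add_eq a 0, zero_add, timeAverage, smul_smul,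
    mul_one_div_cancel hT.ne', one_smul]

theorem ContinuousOn.sub_timeAverage (hT : 0 < T) (hcont : Continuous (Function.uncurry f))
    (hlip : ∀ t, LipschitzWith L (f · t)) {y : ℝ → E} {S : Set ℝ} (hy : ContinuousOn y S) :
    ContinuousOn (fun s => f (y s) s - timeAverage f T (y s)) S := by
  have hf : ∀ x, Continuous (f x) := fun x => hcont.comp (Continuous.prodMk_right x)
  exact (hcont.comp_continuousOn (hy.prodMk continuousOn_id)).sub
    ((lipschitzWith_timeAverage hT (fun x => (hf x).intervalIntegrable _ _) hlip).continuous
      |>.comp_continuousOn hy)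

end TimeAverage

theorem norm_intervalIntegral_le_of_norm_integral_period_le {E : Type*} [NormedAddCommGroup E]
    [NormedSpace ℝ E] {g : ℝ → E} {T b c B : ℝ} (hT : 0 < T) (hc : 0 ≤ c)
    (hg : IntegrableOn g (Icc 0 b))
    (hperiod : ∀ a, 0 ≤ a → a + T ≤ b → ‖∫ s in a..a + T, g s‖ ≤ c)
    (hB : ∀ s ∈ Icc 0 b, ‖g s‖ ≤ B) :
    ∀ t ∈ Icc 0 b, ‖∫ s in (0 : ℝ)..t, g s‖ ≤ t / T * c + B * T := by
  have hint : ∀ a₁ ∈ Icc 0 b, ∀ a₂ ∈ Icc 0 b, IntervalIntegrable g volume a₁ a₂ :=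
    fun a₁ h₁ a₂ h₂ => (hg.mono_set (uIcc_subset_Icc h₁ h₂)).intervalIntegrable
  have hperiods : ∀ k : ℕ, k * T ≤ b → ‖∫ s in (0 : ℝ)..k * T, g s‖ ≤ k * c := by
    intro k
    induction k with
    | zero => simp
    | succ k ih =>
      intro hkb
      push_cast at hkb ⊢
      rw [add_mul, one_mul] at hkb ⊢
      have hk0 : 0 ≤ (k : ℝ) * T := by positivity
      rw [← intervalIntegral.integral_add_adjacent_intervals
        (hint 0 ⟨le_rfl, by linarith⟩ _ ⟨hk0, by linarith⟩)
        (hint _ ⟨hk0, by linarith⟩ _ ⟨by linarith, hkb⟩)]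
      calc _ ≤ ‖∫ s in (0 : ℝ)..k * T, g s‖ + ‖∫ s in k * T..k * T + T, g s‖ := norm_add_le _ _
        _ ≤ k * c + c := add_le_add (ih (by linarith)) (hperiod _ hk0 hkb)
        _ = (k + 1) * c := by ring
  intro t ht
  set k := ⌊t / T⌋₊
  have hkt : k * T ≤ t := (le_div_iff₀ hT).1 (Nat.floor_le (div_nonneg ht.1 hT.le))
  have htk : t < k * T + T := by
    have := (div_lt_iff₀ hT).1 (Nat.lt_floor_add_one (t / T))
    linarith
  have hk0 : 0 ≤ (k : ℝ) * T := by positivity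
  have hfull : ‖∫ s in (0 : ℝ)..k * T, g s‖ ≤ t / T * c := by
    refine (hperiods k (hkt.trans ht.2)).trans ?_
    gcongr
    exact (le_div_iff₀ hT).2 hkt
  have hrest : ‖∫ s in k * T..t, g s‖ ≤ B * T := by
    calc _ ≤ B * |t - k * T| := by
          refine intervalIntegral.norm_integral_le_of_norm_le_const fun s hs => ?_
          rw [uIoc_of_le hkt] at hs
          exact hB s ⟨hk0.trans hs.1.le, hs.2.trans ht.2⟩
      _ ≤ B * T := by
          have hB0 : 0 ≤ B := (norm_nonneg _).trans (hB t ht)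
          rw [abs_of_nonneg (by linarith)]
          gcongr
          linarith
  rw [← intervalIntegral.integral_add_adjacent_intervals
    (hint 0 ⟨le_rfl, ht.1.trans ht.2⟩ _ ⟨hk0, hkt.trans ht.2⟩) (hint _ ⟨hk0, hkt.trans ht.2⟩ t ht)]
  exact (norm_add_le _ _).trans (add_le_add hfull hrest)

theorem gronwallBound_zero_mul (K c x : ℝ) :
    gronwallBound 0 K (K * c) x = c * (Real.exp (K * x) - 1) := by
  rcases eq_or_ne K 0 with rfl | hK
  · simp [gronwallBound_K0]
  · rw [gronwallBound_of_K_ne_0 hK]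
    field_simp
    ring

theorem norm_sub_le_of_integral_perturbation_le {E : Type*} [NormedAddCommGroup E]
    [NormedSpace ℝ E] [CompleteSpace E] {F : E → ℝ → E} {g u v : ℝ → E} {L K b : ℝ}
    (hL : 0 ≤ L) (hF : ∀ t x y, ‖F x t - F y t‖ ≤ L * ‖x - y‖) (hg : ContinuousOn g (Icc 0 b))
    (hu : ∀ t ∈ Icc 0 b, HasDerivWithinAt u (F (u t) t) (Icc 0 b) t)
    (hv : ∀ t ∈ Icc 0 b, HasDerivWithinAt v (F (v t) t - g t) (Icc 0 b) t)
    (h0 : u 0 = v 0) (hK : ∀ t ∈ Icc 0 b, ‖∫ s in (0 : ℝ)..t, g s‖ ≤ K) :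
    ∀ t ∈ Icc 0 b, ‖u t - v t‖ ≤ K * Real.exp (L * t) := by
  set w : ℝ → E := fun t => u t - v t - ∫ s in (0 : ℝ)..t, g s
  have hw : ∀ t ∈ Icc 0 b, HasDerivWithinAt w (F (u t) t - F (v t) t) (Icc 0 b) t := by
    intro t ht
    have : Fact (t ∈ Icc 0 b) := ⟨ht⟩
    have hprim : HasDerivWithinAt (fun t => ∫ s in (0 : ℝ)..t, g s) (g t) (Icc 0 b) t :=
      intervalIntegral.integral_hasDerivWithinAt_right
        (hg.mono (uIcc_subset_Icc ⟨le_rfl, ht.1.trans ht.2⟩ ht)).intervalIntegrable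
        (hg.stronglyMeasurableAtFilter_nhdsWithin measurableSet_Icc t) (hg t ht)
    exact (((hu t ht).sub (hv t ht)).sub hprim).congr_deriv (by abel)
  have huv : ∀ t ∈ Icc 0 b, ‖u t - v t‖ ≤ ‖w t‖ + K := fun t ht =>
    (norm_le_norm_add_norm_sub' _ (∫ s in (0 : ℝ)..t, g s)).trans
      (by simp only [w]; linarith [hK t ht])
  have hgronwall := norm_le_gronwallBound_of_norm_deriv_right_le (δ := 0) (K := L) (ε := L * K)
    (fun t ht => (hw t ht).continuousWithinAt)
    (fun t ht => (hw t (Ico_subset_Icc_self ht)).mono_of_mem_nhdsWithin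
      (Icc_mem_nhdsGE_of_mem ht))
    (by simp [w, h0])
    (fun t ht => (hF t _ _).trans <| by
      nlinarith [huv t (Ico_subset_Icc_self ht)])
  intro t ht
  have := hgronwall t ht
  rw [sub_zero, gronwallBound_zero_mul] at this
  linarith [huv t ht]

section Averaging

variable {E : Type*} [NormedAddCommGroup E] [NormedSpace ℝ E] [CompleteSpace E]
  {f : E → ℝ → E} {T M : ℝ} {L : ℝ≥0}

theorem norm_integral_period_sub_timeAverage_le (hT : 0 < T)
    (hcont : Continuous (Function.uncurry f)) (hper : ∀ x t, f x (t + T) = f x t)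
    (hlip : ∀ t, LipschitzWith L (f · t)) {y : ℝ → E} {a δ : ℝ}
    (hy : ContinuousOn y (Icc a (a + T))) (hδ : ∀ s ∈ Icc a (a + T), ‖y s - y a‖ ≤ δ) :
    ‖∫ s in a..a + T, (f (y s) s - timeAverage f T (y s))‖ ≤ 2 * L * δ * T := by
  have hf : ∀ x, Continuous (f x) := fun x => hcont.comp (Continuous.prodMk_right x)
  have hlipAvg := lipschitzWith_timeAverage hT (fun x => (hf x).intervalIntegrable 0 T) hlip
  have haT : a ≤ a + T := by linarith
  have hfrozen : ∫ s in a..a + T, (f (y a) s - timeAverage f T (y a)) = 0 := by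
    rw [intervalIntegral.integral_sub ((hf _).intervalIntegrable _ _) intervalIntegrable_const,
      intervalIntegral_add_period_eq_smul_timeAverage hT (hper (y a)) a,
      intervalIntegral.integral_const, add_sub_cancel_left, sub_self]
  have hfrozenInt : IntervalIntegrable (fun s => f (y a) s - timeAverage f T (y a)) volume a
      (a + T) := ((hf _).sub continuous_const).intervalIntegrable _ _
  rw [← sub_zero (∫ s in a..a + T, _), ← hfrozen, ← intervalIntegral.integral_sub
    ((hy.sub_timeAverage hT hcont hlip).mono (uIcc_of_le haT).subset).intervalIntegrable
    hfrozenInt]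
  calc _ ≤ 2 * L * δ * |a + T - a| := by
        refine intervalIntegral.norm_integral_le_of_norm_le_const fun s hs => ?_
        have hs' : s ∈ Icc a (a + T) := uIcc_of_le haT ▸ uIoc_subset_uIcc hs
        have h₁ : ‖f (y s) s - f (y a) s‖ ≤ L * δ := by
          rw [← dist_eq_norm]
          exact ((hlip s).dist_le_mul _ _).trans
            (mul_le_mul_of_nonneg_left ((dist_eq_norm _ _).trans_le (hδ s hs')) L.2)
        have h₂ : ‖timeAverage f T (y a) - timeAverage f T (y s)‖ ≤ L * δ := by
          rw [← dist_eq_norm, dist_comm]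
          exact (hlipAvg.dist_le_mul _ _).trans
            (mul_le_mul_of_nonneg_left ((dist_eq_norm _ _).trans_le (hδ s hs')) L.2)
        calc _ = ‖(f (y s) s - f (y a) s) + (timeAverage f T (y a) - timeAverage f T (y s))‖ := by
              congr 1; abel
          _ ≤ L * δ + L * δ := (norm_add_le _ _).trans (add_le_add h₁ h₂)
          _ = 2 * L * δ := by ring
    _ = 2 * L * δ * T := by rw [add_sub_cancel_left, abs_of_pos hT]

theorem norm_integral_sub_timeAverage_le (hT : 0 < T)
    (hcont : Continuous (Function.uncurry f)) (hper : ∀ x t, f x (t + T) = f x t)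
    (hbound : ∀ x t, ‖f x t‖ ≤ M) (hlip : ∀ t, LipschitzWith L (f · t))
    {y : ℝ → E} {ε b : ℝ} (hε : 0 ≤ ε)
    (hy : ∀ t ∈ Icc 0 b, HasDerivWithinAt y (ε • timeAverage f T (y t)) (Icc 0 b) t) :
    ∀ t ∈ Icc 0 b, ‖∫ s in (0 : ℝ)..t, (f (y s) s - timeAverage f T (y s))‖ ≤
      2 * L * M * T * (ε * t) + 2 * M * T := by
  have hyc : ContinuousOn y (Icc 0 b) := fun t ht => (hy t ht).continuousWithinAt
  have hyslow : ∀ a ∈ Icc 0 b, ∀ s ∈ Icc 0 b, ‖y s - y a‖ ≤ ε * M * ‖s - a‖ := by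
    refine fun a ha s hs => (convex_Icc 0 b).norm_image_sub_le_of_norm_hasDerivWithin_le hy
      (fun t _ => ?_) ha hs
    rw [norm_smul, Real.norm_of_nonneg hε]
    exact mul_le_mul_of_nonneg_left (norm_timeAverage_le hT (hbound _)) hε
  have hM : 0 ≤ M := (norm_nonneg _).trans (hbound 0 0)
  intro t ht
  have := norm_intervalIntegral_le_of_norm_integral_period_le hT (by positivity)
    ((hyc.sub_timeAverage hT hcont hlip).integrableOn_compact isCompact_Icc)
    (fun a ha haT => norm_integral_period_sub_timeAverage_le hT hcont hper hlip
      (hyc.mono (Icc_subset_Icc ha haT)) (δ := ε * M * T) fun s hs => ?_)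
    (fun s _ => (norm_sub_le _ _).trans
      (add_le_add (hbound _ _) (norm_timeAverage_le hT (hbound _))))
    t ht
  · calc _ ≤ t / T * (2 * L * (ε * M * T) * T) + (M + M) * T := this
      _ = 2 * L * M * T * (ε * t) + 2 * M * T := by field_simp; ring
  · have hs' : s ∈ Icc 0 b := Icc_subset_Icc ha haT hs
    refine (hyslow a (Icc_subset_Icc ha haT ⟨le_rfl, by linarith [hs.1, hs.2]⟩) s hs').trans ?_
    rw [Real.norm_of_nonneg (by linarith [hs.1])]
    gcongr
    linarith [hs.2]

theorem norm_sub_le_of_hasDerivWithinAt_timeAverage (hT : 0 < T)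
    (hcont : Continuous (Function.uncurry f)) (hper : ∀ x t, f x (t + T) = f x t)
    (hbound : ∀ x t, ‖f x t‖ ≤ M) (hlip : ∀ t, LipschitzWith L (f · t))
    {x y : ℝ → E} {ε b : ℝ} (hε : 0 ≤ ε)
    (hx : ∀ t ∈ Icc 0 b, HasDerivWithinAt x (ε • f (x t) t) (Icc 0 b) t)
    (hy : ∀ t ∈ Icc 0 b, HasDerivWithinAt y (ε • timeAverage f T (y t)) (Icc 0 b) t)
    (h0 : x 0 = y 0) :
    ∀ t ∈ Icc 0 b, ‖x t - y t‖ ≤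
      ε * (2 * L * M * T * (ε * b) + 2 * M * T) * Real.exp (ε * L * t) := by
  have hM : 0 ≤ M := (norm_nonneg _).trans (hbound 0 0)
  have hyc : ContinuousOn y (Icc 0 b) := fun t ht => (hy t ht).continuousWithinAt
  refine norm_sub_le_of_integral_perturbation_le (F := fun x t => ε • f x t)
    (g := fun s => ε • (f (y s) s - timeAverage f T (y s))) (by positivity)
    (fun t x₁ x₂ => ?_) ((hyc.sub_timeAverage hT hcont hlip).const_smul ε) hx
    (fun t ht => (hy t ht).congr_deriv (by rw [smul_sub, sub_sub_cancel])) h0 (fun t ht => ?_)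
  · rw [← smul_sub, norm_smul, Real.norm_of_nonneg hε, mul_assoc, ← dist_eq_norm, ← dist_eq_norm]
    exact mul_le_mul_of_nonneg_left ((hlip t).dist_le_mul x₁ x₂) hε
  · rw [intervalIntegral.integral_smul, norm_smul, Real.norm_of_nonneg hε]
    refine mul_le_mul_of_nonneg_left
      ((norm_integral_sub_timeAverage_le hT hcont hper hbound hlip hε hy t ht).trans ?_) hε
    have := ht.2
    gcongr

end Averaging

/-- First-order averaging theorem: for a continuous, `T`-periodic vector
field `f` bounded by `M` and Lipschitz in `x` with constant `L` uniformly in `t`, the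
solution of `ẋ = ε f(x, t)` stays within `C·ε` of the solution of the averaged equation
`ẏ = ε f̄(y)`, `f̄(x) = (1/T)∫₀ᵀ f(x,s) ds`, on the time interval `[0, T₀/ε]`, with `C`
depending only on `M`, `L`, `T`, `T₀`. -/
theorem first_order_averaging
    {n : ℕ} (f : EuclideanSpace ℝ (Fin n) → ℝ → EuclideanSpace ℝ (Fin n))
    (T M : ℝ) (L : NNReal) (hT : 0 < T)
    (hcont : Continuous (Function.uncurry f))
    (hper : ∀ x t, f x (t + T) = f x t)
    (hbound : ∀ x t, ‖f x t‖ ≤ M)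
    (hlip : ∀ t, LipschitzWith L (fun x => f x t))
    (T₀ : ℝ) (hT₀ : 0 < T₀) :
    ∃ C : ℝ, ∀ x₀ : EuclideanSpace ℝ (Fin n), ∀ ε ∈ Ioc (0 : ℝ) 1,
      ∀ xε yε : ℝ → EuclideanSpace ℝ (Fin n),
        xε 0 = x₀ → yε 0 = x₀ →
        (∀ t ∈ Icc (0 : ℝ) (T₀ / ε),
          HasDerivWithinAt xε (ε • f (xε t) t) (Icc (0 : ℝ) (T₀ / ε)) t) →
        (∀ t ∈ Icc (0 : ℝ) (T₀ / ε),
          HasDerivWithinAt yε (ε • ((1 / T) • ∫ s in (0 : ℝ)..T, f (yε t) s))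
            (Icc (0 : ℝ) (T₀ / ε)) t) →
        ∀ t ∈ Icc (0 : ℝ) (T₀ / ε), ‖xε t - yε t‖ ≤ C * ε := by
  set K := 2 * L * M * T * T₀ + 2 * M * T
  have hK : 0 ≤ K := by
    have hM : 0 ≤ M := (norm_nonneg _).trans (hbound 0 0)
    positivity
  refine ⟨K * Real.exp (L * T₀), fun x₀ ε ⟨hε, _⟩ xε yε hx0 hy0 hxd hyd t ht => ?_⟩
  have hclose := norm_sub_le_of_hasDerivWithinAt_timeAverage hT hcont hper hbound hlip hε.le
    hxd hyd (hx0.trans hy0.symm) t ht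
  rw [mul_div_cancel₀ _ hε.ne'] at hclose
  have hεt : ε * L * t ≤ L * T₀ := by
    have := (le_div_iff₀' hε).1 ht.2
    nlinarith [L.2]
  calc ‖xε t - yε t‖ ≤ ε * K * Real.exp (ε * L * t) := hclose
    _ ≤ ε * K * Real.exp (L * T₀) := by gcongr
    _ = K * Real.exp (L * T₀) * ε := by ring
end

section
/- (Madelung/Bohm decomposition, one particle.) Let m > 0, V : ℝ × ℝ → ℝ, and let R, S : ℝ × ℝ → ℝ be such that R(x,t) > 0 for all (x,t) and all partial derivatives below exist (R, S twice differentiable in x and once in t). Define ψ(x,t) := R(x,t)·e^{i S(x,t)}. Then ψ satisfies the Schrödinger equation i·∂_t ψ = −(1/(2m))·∂_x² ψ + V·ψ at every point if and only if at every point the pair (R, S) satisfies: (i) the continuity equation ∂_t(R²) = −(1/m)·∂_x(R²·∂_x S), and (ii) the quantum Hamilton–Jacobi equation ∂_t S = −(1/(2m))·(∂_x S)² − V − V_q, where V_q := −(1/(2m))·(∂_x² R)/R is Bohm's quantum potential. -/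
/-!
Writing `ψ = R e^{iS}` and differentiating,
`i ∂_t ψ + (1/(2m)) ∂_x² ψ − V ψ = (A + i B) e^{iS}` with `A, B` real, where
`A = −R · (Hamilton–Jacobi residual)` and `B = (continuity residual) / (2R)`.
Since `e^{iS} ≠ 0` and `R ≠ 0`, the Schrödinger equation holds at a point iff both residuals
vanish there.
-/

open Complex

section PolarForm

variable {g : ℝ → ℝ} {x g' : ℝ}

theorem hasDerivAt_mul_cexp_I_mul {u : ℝ → ℂ} {u' : ℂ} (hu : HasDerivAt u u' x)
    (hg : HasDerivAt g g' x) :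
    HasDerivAt (fun y => u y * exp (I * g y)) ((u' + I * u x * g') * exp (I * g x)) x :=
  (hu.fun_mul (hg.ofReal_comp.const_mul I).cexp).congr_deriv (by ring)

theorem deriv_ofReal_mul_cexp_I_mul {f : ℝ → ℝ} (hf : Differentiable ℝ f)
    (hg : Differentiable ℝ g) :
    deriv (fun y => (f y : ℂ) * exp (I * g y)) =
      fun y => (deriv f y + I * f y * deriv g y) * exp (I * g y) :=
  funext fun y =>
    (hasDerivAt_mul_cexp_I_mul (hf y).hasDerivAt.ofReal_comp (hg y).hasDerivAt).deriv

theorem hasDerivAt_deriv_ofReal_mul_cexp_I_mul {f : ℝ → ℝ} {f'' g'' : ℝ}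
    (hf : Differentiable ℝ f) (hg : Differentiable ℝ g)
    (hf' : HasDerivAt (deriv f) f'' x) (hg' : HasDerivAt (deriv g) g'' x) :
    HasDerivAt (deriv fun y => (f y : ℂ) * exp (I * g y))
      ((f'' + 2 * I * deriv f x * deriv g x + I * f x * g'' - f x * deriv g x ^ 2) *
        exp (I * g x)) x := by
  rw [deriv_ofReal_mul_cexp_I_mul hf hg]
  have hu := hf'.ofReal_comp.fun_add
    (((hf x).hasDerivAt.ofReal_comp.const_mul I).fun_mul hg'.ofReal_comp)
  exact (hasDerivAt_mul_cexp_I_mul hu (hg x).hasDerivAt).congr_deriv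
    (by linear_combination (f x : ℂ) * deriv g x ^ 2 * exp (I * g x) * I_sq)

end PolarForm

theorem ofReal_add_ofReal_mul_I_eq_zero {a b : ℝ} :
    (a : ℂ) + b * I = 0 ↔ a = 0 ∧ b = 0 := by
  simp [Complex.ext_iff]

theorem schrodinger_residual_eq (m r rt st rx sx rxx sxx v : ℝ) (hr : r ≠ 0) (E : ℂ) :
    I * ((rt + I * r * st) * E) - (-(1 / (2 * (m : ℂ))) *
        ((rxx + 2 * I * rx * sx + I * r * sxx - r * sx ^ 2) * E) + v * (r * E)) =
      ((-(r * (st - (-(1 / (2 * m)) * sx ^ 2 - v - (-(1 / (2 * m)) * (rxx / r))))) : ℝ) +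
        ((2 * r * rt - -(1 / m) * (2 * r * rx * sx + r ^ 2 * sxx)) / (2 * r) : ℝ) * I) * E := by
  have hr' : (r : ℂ) ≠ 0 := ofReal_ne_zero.mpr hr
  push_cast
  field_simp
  linear_combination (2 * E * r * st) * I_sq

theorem schrodinger_iff_continuity_and_hamiltonJacobi (m r rt st rx sx rxx sxx v : ℝ)
    (hr : r ≠ 0) {E : ℂ} (hE : E ≠ 0) :
    I * ((rt + I * r * st) * E) = -(1 / (2 * (m : ℂ))) *
        ((rxx + 2 * I * rx * sx + I * r * sxx - r * sx ^ 2) * E) + v * (r * E) ↔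
      2 * r * rt = -(1 / m) * (2 * r * rx * sx + r ^ 2 * sxx) ∧
        st = -(1 / (2 * m)) * sx ^ 2 - v - (-(1 / (2 * m)) * (rxx / r)) := by
  rw [← sub_eq_zero, schrodinger_residual_eq m r rt st rx sx rxx sxx v hr, mul_eq_zero,
    or_iff_left hE, ofReal_add_ofReal_mul_I_eq_zero, neg_eq_zero, mul_eq_zero, or_iff_right hr,
    div_eq_zero_iff, or_iff_left (mul_ne_zero two_ne_zero hr), sub_eq_zero, sub_eq_zero, and_comm]

theorem madelung_bohm_one_particle_general
    (m : ℝ) (V : ℝ → ℝ → ℝ) (R S : ℝ → ℝ → ℝ)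
    (hRpos : ∀ x t, 0 < R x t)
    (hRt : ∀ x t, DifferentiableAt ℝ (fun τ => R x τ) t)
    (hSt : ∀ x t, DifferentiableAt ℝ (fun τ => S x τ) t)
    (hRx : ∀ x t, DifferentiableAt ℝ (fun ξ => R ξ t) x)
    (hSx : ∀ x t, DifferentiableAt ℝ (fun ξ => S ξ t) x)
    (hRxx : ∀ x t, DifferentiableAt ℝ (fun ξ => deriv (fun ξ' => R ξ' t) ξ) x)
    (hSxx : ∀ x t, DifferentiableAt ℝ (fun ξ => deriv (fun ξ' => S ξ' t) ξ) x) :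
    (∀ x t,
        Complex.I *
            deriv (fun τ => (R x τ : ℂ) * Complex.exp (Complex.I * (S x τ : ℂ))) t =
          -(1 / (2 * (m : ℂ))) *
              deriv (fun ξ =>
                deriv (fun ξ' => (R ξ' t : ℂ) * Complex.exp (Complex.I * (S ξ' t : ℂ))) ξ) x +
            (V x t : ℂ) * ((R x t : ℂ) * Complex.exp (Complex.I * (S x t : ℂ)))) ↔
      ((∀ x t,
          deriv (fun τ => R x τ ^ 2) t =
            -(1 / m) * deriv (fun ξ => R ξ t ^ 2 * deriv (fun ξ' => S ξ' t) ξ) x) ∧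
        (∀ x t,
          deriv (fun τ => S x τ) t =
            -(1 / (2 * m)) * (deriv (fun ξ => S ξ t) x) ^ 2 - V x t -
              (-(1 / (2 * m)) * (deriv (fun ξ => deriv (fun ξ' => R ξ' t) ξ) x / R x t)))) := by
  simp only [← forall_and]
  refine forall_congr' fun x => forall_congr' fun t => ?_
  have hψt := (hasDerivAt_mul_cexp_I_mul (hRt x t).hasDerivAt.ofReal_comp
    (hSt x t).hasDerivAt).deriv
  have hψxx := (hasDerivAt_deriv_ofReal_mul_cexp_I_mul (hRx · t) (hSx · t)
    (hRxx x t).hasDerivAt (hSxx x t).hasDerivAt).deriv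
  have hρt : deriv (fun τ => R x τ ^ 2) t = 2 * R x t * deriv (fun τ => R x τ) t := by
    rw [deriv_fun_pow (hRt x t)]
    ring
  have hflux : deriv (fun ξ => R ξ t ^ 2 * deriv (fun ξ' => S ξ' t) ξ) x =
      2 * R x t * deriv (fun ξ => R ξ t) x * deriv (fun ξ => S ξ t) x +
        R x t ^ 2 * deriv (fun ξ => deriv (fun ξ' => S ξ' t) ξ) x := by
    rw [(((hRx x t).hasDerivAt.fun_pow 2).fun_mul (hSxx x t).hasDerivAt).deriv]
    ring
  rw [hψt, hψxx, hρt, hflux]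
  exact schrodinger_iff_continuity_and_hamiltonJacobi m _ _ _ _ _ _ _ (V x t)
    (hRpos x t).ne' (exp_ne_zero _)

/-- Madelung/Bohm decomposition, one particle: with `ψ = R e^{iS}`,
`R > 0`, the Schrödinger equation `i ∂_t ψ = −(1/(2m)) ∂_x² ψ + V ψ` holds at every
point iff the continuity equation `∂_t(R²) = −(1/m) ∂_x(R² ∂_x S)` and the quantum
Hamilton–Jacobi equation `∂_t S = −(1/(2m))(∂_x S)² − V − V_q` hold at every point,
where `V_q = −(1/(2m)) (∂_x² R)/R` is Bohm's quantum potential (units `ℏ = 1`). -/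
theorem madelung_bohm_one_particle
    (m : ℝ) (hm : 0 < m) (V : ℝ → ℝ → ℝ) (R S : ℝ → ℝ → ℝ)
    (hRpos : ∀ x t, 0 < R x t)
    (hRt : ∀ x t, DifferentiableAt ℝ (fun τ => R x τ) t)
    (hSt : ∀ x t, DifferentiableAt ℝ (fun τ => S x τ) t)
    (hRx : ∀ x t, DifferentiableAt ℝ (fun ξ => R ξ t) x)
    (hSx : ∀ x t, DifferentiableAt ℝ (fun ξ => S ξ t) x)
    (hRxx : ∀ x t, DifferentiableAt ℝ (fun ξ => deriv (fun ξ' => R ξ' t) ξ) x)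
    (hSxx : ∀ x t, DifferentiableAt ℝ (fun ξ => deriv (fun ξ' => S ξ' t) ξ) x) :
    (∀ x t,
        Complex.I *
            deriv (fun τ => (R x τ : ℂ) * Complex.exp (Complex.I * (S x τ : ℂ))) t =
          -(1 / (2 * (m : ℂ))) *
              deriv (fun ξ =>
                deriv (fun ξ' => (R ξ' t : ℂ) * Complex.exp (Complex.I * (S ξ' t : ℂ))) ξ) x +
            (V x t : ℂ) * ((R x t : ℂ) * Complex.exp (Complex.I * (S x t : ℂ)))) ↔
      ((∀ x t,
          deriv (fun τ => R x τ ^ 2) t =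
            -(1 / m) * deriv (fun ξ => R ξ t ^ 2 * deriv (fun ξ' => S ξ' t) ξ) x) ∧
        (∀ x t,
          deriv (fun τ => S x τ) t =
            -(1 / (2 * m)) * (deriv (fun ξ => S ξ t) x) ^ 2 - V x t -
              (-(1 / (2 * m)) * (deriv (fun ξ => deriv (fun ξ' => R ξ' t) ξ) x / R x t)))) :=
  madelung_bohm_one_particle_general m V R S hRpos hRt hSt hRx hSx hRxx hSxx
end
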